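/- An NFA G is standard current-state opaque with respect to Σ_o and X_S if and only if its parallel composition with its observer, Cc(G, Obs(G)), contains no reachable state (x, q) with q ⊆ X_S. -/

import Mathlib

namespace SBO

variable {X E : Type}

/-- Extended transition function of an NFA. -/
def ext (δ : X → E → Set X) : X → List E → Set X
  | x, [] => {x}
  | x, σ :: s => ⋃ y ∈ δ x σ, ext δ y s

/-- A run from `x` to `z` labeled by `s`. -/
def IsRun (δ : X → E → Set X) : X → List E → X → Prop
  | x, [], z => x = z
  | x, σ :: s, z => ∃ y ∈ δ x σ, IsRun δ y s z

/-- A run all of whose states lie in `NS`. -/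
def IsNSRun (δ : X → E → Set X) (NS : Set X) : X → List E → X → Prop
  | x, [], z => x = z ∧ x ∈ NS
  | x, σ :: s, z => x ∈ NS ∧ ∃ y ∈ δ x σ, IsNSRun δ NS y s z

/-- Natural projection onto observable events. -/
def proj (Eo : E → Bool) (s : List E) : List E := s.filter Eo

/-- Strong K-step opacity, Definition 3.1 (suffix of the matching run is non-secret). -/
def KSSO (δ : X → E → Set X) (Eo : E → Bool) (X0 XS : Set X) (K : ℕ) : Prop :=
  ∀ x0 ∈ X0, ∀ s1 s2 : List E, ∀ x1 x2 : X,
    IsRun δ x0 s1 x1 → x1 ∈ XS → IsRun δ x1 s2 x2 → (proj Eo s2).length ≤ K →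
    ∃ x0' ∈ X0, ∃ s1' s2' : List E, ∃ x1' x2' : X,
      IsRun δ x0' s1' x1' ∧ IsNSRun δ XSᶜ x1' s2' x2' ∧
      proj Eo s1' = proj Eo s1 ∧ proj Eo s2' = proj Eo s2

/-- Strong K-step opacity, Definition 3.1b (matching run entirely non-secret). -/
def KSSOb (δ : X → E → Set X) (Eo : E → Bool) (X0 XS : Set X) (K : ℕ) : Prop :=
  ∀ x0 ∈ X0, ∀ s1 s2 : List E, ∀ x1 x2 : X,
    IsRun δ x0 s1 x1 → x1 ∈ XS → IsRun δ x1 s2 x2 → (proj Eo s2).length ≤ K →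
    ∃ x0' ∈ X0, ∃ s1' s2' : List E, ∃ x1' x2' : X,
      IsNSRun δ XSᶜ x0' s1' x1' ∧ IsNSRun δ XSᶜ x1' s2' x2' ∧
      proj Eo s1' = proj Eo s1 ∧ proj Eo s2' = proj Eo s2

/-- Standard current-state opacity. -/
def CSO (δ : X → E → Set X) (Eo : E → Bool) (X0 XS : Set X) : Prop :=
  ∀ x0 ∈ X0, ∀ s : List E, (∃ z ∈ ext δ x0 s, z ∈ XS) →
    ∃ x0' ∈ X0, ∃ s' : List E, proj Eo s' = proj Eo s ∧ ∃ z ∈ ext δ x0' s', z ∈ XSᶜ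

/-- Strong current-state opacity. -/
def SCSO (δ : X → E → Set X) (Eo : E → Bool) (X0 XS : Set X) : Prop :=
  ∀ x0 ∈ X0, ∀ s : List E, (∃ z ∈ ext δ x0 s, z ∈ XS) →
    ∃ x0' ∈ X0 \ XS, ∃ t : List E, ∃ x : X, IsNSRun δ XSᶜ x0' t x ∧ proj Eo t = proj Eo s

/-- Strong initial-state opacity. -/
def SISO (δ : X → E → Set X) (Eo : E → Bool) (X0 XS : Set X) : Prop :=
  ∀ x0 ∈ X0 ∩ XS, ∀ s : List E, (ext δ x0 s).Nonempty →
    ∃ x0' ∈ X0 \ XS, ∃ t : List E, ∃ x : X, IsNSRun δ XSᶜ x0' t x ∧ proj Eo t = proj Eo s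

/-- Strong infinite-step opacity. -/
def InfSSO (δ : X → E → Set X) (Eo : E → Bool) (X0 XS : Set X) : Prop :=
  ∀ x0 ∈ X0, ∀ s1 s2 : List E, (ext δ x0 (s1 ++ s2)).Nonempty →
    (∃ z ∈ ext δ x0 s1, z ∈ XS) →
    ∃ x0' ∈ X0 \ XS, ∃ t : List E, ∃ x : X, IsNSRun δ XSᶜ x0' t x ∧
      proj Eo t = proj Eo (s1 ++ s2)

/-- Observer transition on one observable event (empty set = undefined). -/
def obsStep (δ : X → E → Set X) (Eo : E → Bool) (q : Set X) (σ : E) : Set X :=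
  {x' | ∃ x ∈ q, ∃ w : List E, (∀ e ∈ w, Eo e = false) ∧ x' ∈ ext δ x (σ :: w)}

/-- Initial observer state: unobservable reach of the initial states. -/
def obsInit (δ : X → E → Set X) (Eo : E → Bool) (X0 : Set X) : Set X :=
  {x' | ∃ x ∈ X0, ∃ w : List E, (∀ e ∈ w, Eo e = false) ∧ x' ∈ ext δ x w}

/-- Observer transition extended to observation strings. -/
def obsExt (δ : X → E → Set X) (Eo : E → Bool) : Set X → List E → Set X
  | q, [] => q
  | q, σ :: α => obsExt δ Eo (obsStep δ Eo q σ) α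

/-- Synchronous step of `Cc(G, Obs(G))`. -/
def ccStep (δ : X → E → Set X) (Eo : E → Bool) (p p' : X × Set X) : Prop :=
  ∃ σ : E,
    (Eo σ = true ∧ p'.1 ∈ δ p.1 σ ∧ (obsStep δ Eo p.2 σ).Nonempty ∧
      p'.2 = obsStep δ Eo p.2 σ) ∨
    (Eo σ = false ∧ p'.1 ∈ δ p.1 σ ∧ p'.2 = p.2)

/-- Reachability in `Cc(G, Obs(G))`. -/
def ccReach (δ : X → E → Set X) (Eo : E → Bool) (X0 : Set X) (p : X × Set X) : Prop :=
  ∃ x ∈ obsInit δ Eo X0, Relation.ReflTransGen (ccStep δ Eo) (x, obsInit δ Eo X0) p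

/-- Deleting a set of transitions from an NFA. -/
def delTrans (δ : X → E → Set X) (Edel : Set (X × E × X)) : X → E → Set X :=
  fun x σ => {y ∈ δ x σ | (x, σ, y) ∉ Edel}

/-- Transitions of the non-secret subautomaton (secret states deleted). -/
def δdss (δ : X → E → Set X) (XS : Set X) : X → E → Set X :=
  fun x σ => {y ∈ δ x σ | x ∉ XS ∧ y ∉ XS}

/-- One step of the concurrent composition `Cc(Ĝ, G̃_obs)`. -/
def cc2Step (δ δt : X → E → Set X) (Eo : E → Bool) (p : X × Set X) (σ : E) :
    Set (X × Set X) :=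
  if Eo σ then {p' | p'.1 ∈ δ p.1 σ ∧ p'.2 = obsStep δt Eo p.2 σ}
  else {p' | p'.1 ∈ δ p.1 σ ∧ p'.2 = p.2}

/-- Extended transition function of `Cc(Ĝ, G̃_obs)`. -/
def cc2Ext (δ δt : X → E → Set X) (Eo : E → Bool) : (X × Set X) → List E → Set (X × Set X)
  | p, [] => {p}
  | p, σ :: s => ⋃ p' ∈ cc2Step δ δt Eo p σ, cc2Ext δ δt Eo p' s

/-- Initial states of `Cc(Ĝ, G̃_obs)`. -/
def ccInit (δ : X → E → Set X) (Eo : E → Bool) (X0 XS : Set X) : Set (X × Set X) :=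
  {p | ∃ α : List E, (∀ e ∈ α, Eo e = true) ∧
    p.1 ∈ XS ∩ obsExt δ Eo (obsInit δ Eo X0) α ∧
    p.2 = obsExt δ Eo (obsInit δ Eo X0) α ∩ XSᶜ}

end SBO

open SBO

/-!
Along any run `s` of `G` from an initial state, the observer component of `Cc(G, Obs(G))`
sits in the current-state estimate of `P(s)`, the set of states reachable by some run with the
same projection; conversely every pair `(x, estimate of P(s))` with `x` reached by `s` is
reachable. Hence a reachable `(x, q)` with `q ⊆ X_S` is exactly an observation whose whole
estimate is secret although a secret state is reached, i.e. a violation of opacity.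
-/

namespace SBO

variable {X E : Type} {δ : X → E → Set X} {Eo : E → Bool}

theorem mem_ext_append {x z : X} {s t : List E} :
    z ∈ ext δ x (s ++ t) ↔ ∃ y ∈ ext δ x s, z ∈ ext δ y t := by
  induction s generalizing x with
  | nil => simp [ext]
  | cons σ s ih => simp only [List.cons_append, ext, Set.mem_iUnion₂, ih]; aesop

@[simp]
theorem mem_ext_singleton {x y : X} {σ : E} : y ∈ ext δ x [σ] ↔ y ∈ δ x σ := by
  simp [ext]

@[simp]
theorem proj_append (s t : List E) : proj Eo (s ++ t) = proj Eo s ++ proj Eo t :=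
  List.filter_append ..

theorem proj_cons (σ : E) (s : List E) :
    proj Eo (σ :: s) = if Eo σ then σ :: proj Eo s else proj Eo s := by
  cases h : Eo σ <;> simp [proj, h]

theorem proj_eq_nil_iff {w : List E} : proj Eo w = [] ↔ ∀ e ∈ w, Eo e = false := by
  simp [proj, List.filter_eq_nil_iff]

theorem obsExt_append (q : Set X) (α β : List E) :
    obsExt δ Eo q (α ++ β) = obsExt δ Eo (obsExt δ Eo q α) β := by
  induction α generalizing q with
  | nil => rfl
  | cons σ α ih => exact ih _

variable (δ Eo) in
def stateEstimate (X0 : Set X) (α : List E) : Set X :=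
  {z | ∃ x0 ∈ X0, ∃ s : List E, proj Eo s = α ∧ z ∈ ext δ x0 s}

theorem obsExt_obsInit_eq_stateEstimate (X0 : Set X) {α : List E}
    (hα : ∀ e ∈ α, Eo e = true) :
    obsExt δ Eo (obsInit δ Eo X0) α = stateEstimate δ Eo X0 α := by
  induction α using List.reverseRecOn with
  | nil =>
    ext z
    simp only [obsExt, obsInit, stateEstimate, proj_eq_nil_iff, Set.mem_ofPred_eq]
  | append_singleton α σ ih =>
    have hσ : Eo σ = true := hα σ (by simp)
    rw [obsExt_append, ih fun e he => hα e (by simp [he])]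
    ext z
    constructor
    · rintro ⟨x, ⟨x0, hx0, s, rfl, hx⟩, w, hw, hz⟩
      refine ⟨x0, hx0, s ++ σ :: w, ?_, mem_ext_append.2 ⟨x, hx, hz⟩⟩
      simp [proj_cons, hσ, proj_eq_nil_iff.2 hw]
    · rintro ⟨x0, hx0, s, hs, hz⟩
      -- split `s` at its last observable event, which is `σ`
      obtain ⟨u, s', rfl, hu, hs'⟩ := List.filter_eq_append_iff.1 hs
      obtain ⟨v, w, rfl, hv, -, hw⟩ := List.filter_eq_cons_iff.1 hs'
      rw [← List.append_assoc, mem_ext_append] at hz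
      obtain ⟨x, hx, hz⟩ := hz
      have hv' : proj Eo v = [] := proj_eq_nil_iff.2 (by simpa using hv)
      refine ⟨x, ⟨x0, hx0, u ++ v, ?_, hx⟩, w, proj_eq_nil_iff.1 hw, hz⟩
      rw [proj_append, hv', List.append_nil]
      exact hu

theorem obsExt_obsInit_proj (X0 : Set X) (s : List E) :
    obsExt δ Eo (obsInit δ Eo X0) (proj Eo s) = stateEstimate δ Eo X0 (proj Eo s) :=
  obsExt_obsInit_eq_stateEstimate X0 fun _ he => (List.mem_filter.1 he).2

theorem ccStep.exists_event {p p' : X × Set X} (h : ccStep δ Eo p p') :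
    ∃ σ, p'.1 ∈ δ p.1 σ ∧ p'.2 = obsExt δ Eo p.2 (proj Eo [σ]) := by
  obtain ⟨σ, ⟨hσ, hδ, -, hq⟩ | ⟨hσ, hδ, hq⟩⟩ := h <;>
    exact ⟨σ, hδ, by simp [hq, hσ, proj, obsExt]⟩

theorem ccStep_of_mem {x y : X} {q : Set X} {σ : E} (hx : x ∈ q) (hy : y ∈ δ x σ) :
    ccStep δ Eo (x, q) (y, obsExt δ Eo q (proj Eo [σ])) := by
  cases hσ : Eo σ
  · exact ⟨σ, Or.inr ⟨hσ, hy, by simp [hσ, proj, obsExt]⟩⟩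
  · have hy' : y ∈ obsStep δ Eo q σ := ⟨x, hx, [], by simp, by simpa using hy⟩
    exact ⟨σ, Or.inl ⟨hσ, hy, ⟨y, hy'⟩, by simp [hσ, proj, obsExt]⟩⟩

theorem ccReach.exists_run {X0 : Set X} {p : X × Set X} (h : ccReach δ Eo X0 p) :
    ∃ x0 ∈ X0, ∃ s, p.1 ∈ ext δ x0 s ∧ p.2 = obsExt δ Eo (obsInit δ Eo X0) (proj Eo s) := by
  obtain ⟨y, ⟨x0, hx0, w, hw, hy⟩, hreach⟩ := h
  induction hreach with
  | refl => exact ⟨x0, hx0, w, hy, by simp [proj_eq_nil_iff.2 hw, obsExt]⟩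
  | tail _ hstep ih =>
    obtain ⟨x0, hx0, s, hs, hq⟩ := ih
    obtain ⟨σ, hδ, hq'⟩ := hstep.exists_event
    refine ⟨x0, hx0, s ++ [σ], mem_ext_append.2 ⟨_, hs, by simpa using hδ⟩, ?_⟩
    rw [hq', hq, proj_append, obsExt_append]

theorem ccReach_of_mem_ext {X0 : Set X} {x0 x : X} (hx0 : x0 ∈ X0) {s : List E}
    (hx : x ∈ ext δ x0 s) :
    ccReach δ Eo X0 (x, obsExt δ Eo (obsInit δ Eo X0) (proj Eo s)) := by
  refine ⟨x0, ⟨x0, hx0, [], by simp, by simp [ext]⟩, ?_⟩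
  induction s using List.reverseRecOn generalizing x with
  | nil =>
    obtain rfl : x = x0 := by simpa [ext] using hx
    exact .refl
  | append_singleton s σ ih =>
    obtain ⟨y, hy, hxy⟩ := mem_ext_append.1 hx
    have hyq : y ∈ obsExt δ Eo (obsInit δ Eo X0) (proj Eo s) := by
      rw [obsExt_obsInit_proj]
      exact ⟨x0, hx0, s, rfl, hy⟩
    rw [proj_append, obsExt_append]
    exact (ih hy).tail (ccStep_of_mem hyq (by simpa using hxy))

theorem ccReach_iff {X0 : Set X} {x : X} {q : Set X} :
    ccReach δ Eo X0 (x, q) ↔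
      ∃ x0 ∈ X0, ∃ s, x ∈ ext δ x0 s ∧ q = stateEstimate δ Eo X0 (proj Eo s) := by
  simp only [← obsExt_obsInit_proj]
  refine ⟨ccReach.exists_run, ?_⟩
  rintro ⟨x0, hx0, s, hx, rfl⟩
  exact ccReach_of_mem_ext hx0 hx

end SBO

/-- standard current-state opacity holds iff `Cc(G, Obs(G))` has no
reachable state `(x, q)` with `q ⊆ X_S`. -/
theorem CSO_iff_ccGObs {X E : Type} (δ : X → E → Set X) (Eo : E → Bool)
    (X0 XS : Set X) :
    CSO δ Eo X0 XS ↔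
      ¬ ∃ x : X, ∃ q : Set X, ccReach δ Eo X0 (x, q) ∧ q ⊆ XS := by
  constructor
  · rintro hCSO ⟨x, q, hreach, hqS⟩
    obtain ⟨x0, hx0, s, hx, rfl⟩ := ccReach_iff.1 hreach
    obtain ⟨x0', hx0', s', hs', z, hz, hzNS⟩ := hCSO x0 hx0 s ⟨x, hx, hqS ⟨x0, hx0, s, rfl, hx⟩⟩
    exact hzNS (hqS ⟨x0', hx0', s', hs', hz⟩)
  · rintro hNoReach x0 hx0 s ⟨z, hz, -⟩
    have hreach : ccReach δ Eo X0 (z, stateEstimate δ Eo X0 (proj Eo s)) :=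
      ccReach_iff.2 ⟨x0, hx0, s, hz, rfl⟩
    obtain ⟨z', ⟨x0', hx0', s', hs', hz'⟩, hz'NS⟩ :=
      Set.not_subset.1 fun hqS => hNoReach ⟨z, _, hreach, hqS⟩
    exact ⟨x0', hx0', s', hs', z', hz', hz'NS⟩
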